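/- arXiv:0910.5281 — 4 statements merged into one kernel-verified Lean document; each statement's English description precedes it below -/
import Mathlib

section
/- Let p and p′ be two nanophrases in P_n(α,O). If p ∼ p′, then p ∼_O p′. -/
/-- A phrase datum over `α`: a Gauss-phrase-candidate written as a single list in which
`some A` is an occurrence of the letter `A` (letters are natural numbers) and `none` is a
component separator, together with a projection of the letters to `α`.  An `n`-component
phrase has `n - 1` separators. -/
structure Phrase (α : Type) where
  word : List (Option ℕ)
  proj : ℕ → α

namespace Phrase

variable {α : Type}

/-- The Gauss condition: every letter that occurs, occurs exactly twice. -/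
def IsGauss (p : Phrase α) : Prop :=
  ∀ A : ℕ, p.word.count (some A) = 0 ∨ p.word.count (some A) = 2

/-- The list of components (words in the letters) of a phrase datum. -/
def compsOf (w : List (Option ℕ)) : List (List ℕ) :=
  (w.splitOn none).map (List.filterMap id)

/-- The number of components of a phrase. -/
def numComps (p : Phrase α) : ℕ := (compsOf p.word).length

/-- The `i`-th component (0-indexed) of a phrase. -/
def comp (p : Phrase α) (i : ℕ) : List ℕ := (compsOf p.word).getD i []

/-- Isomorphism of phrases: a projection-preserving bijective renaming of letters,
applied componentwise. -/
def Isom (p q : Phrase α) : Prop :=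
  ∃ f : Equiv.Perm ℕ,
    q.word = p.word.map (Option.map f) ∧
    ∀ A : ℕ, some A ∈ p.word → q.proj (f A) = p.proj A

/-- A single homotopy move (H1, H2 or H3), with data `τ` (an involution on `α`) and
`S ⊆ α × α × α`.  The patterns are contiguous in the phrase; the intervening segments
`x, y, z, t` may contain component separators. -/
def Move (τ : α → α) (S : Set (α × α × α)) (p q : Phrase α) : Prop :=
  q.proj = p.proj ∧
  ((∃ (x y : List (Option ℕ)) (A : ℕ),
      p.word = x ++ some A :: some A :: y ∧ q.word = x ++ y) ∨
   (∃ (x y z : List (Option ℕ)) (A B : ℕ),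
      τ (p.proj A) = p.proj B ∧
      p.word = x ++ some A :: some B :: (y ++ some B :: some A :: z) ∧
      q.word = x ++ (y ++ z)) ∨
   (∃ (x y z t : List (Option ℕ)) (A B C : ℕ),
      (p.proj A, p.proj B, p.proj C) ∈ S ∧
      p.word = x ++ some A :: some B :: (y ++ some A :: some C :: (z ++ some B :: some C :: t)) ∧
      q.word = x ++ some B :: some A :: (y ++ some C :: some A :: (z ++ some C :: some B :: t))))

/-- Homotopy of phrases over `α`: the equivalence relation generated by isomorphisms
and the homotopy moves. -/
def Homotopy (τ : α → α) (S : Set (α × α × α)) : Phrase α → Phrase α → Prop :=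
  Relation.EqvGen (fun p q => Isom p q ∨ Move τ S p q)

end Phrase

namespace Phrase

variable {α : Type}

/-- `p` lies in `P_n(α, O)`: every component whose index lies in `O` is empty. -/
def InPO (O : Finset ℕ) (p : Phrase α) : Prop := ∀ i ∈ O, comp p i = []

/-- The relation `∼_O`: the equivalence relation generated by isomorphisms and homotopy
moves relating phrases all of whose components with index in `O` are empty. -/
def HomotopyO (τ : α → α) (S : Set (α × α × α)) (O : Finset ℕ) :
    Phrase α → Phrase α → Prop :=
  Relation.EqvGen (fun p q => (Isom p q ∨ Move τ S p q) ∧ InPO O p ∧ InPO O q)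

/-- `f_O(p)`: delete from `p` every letter occurring at least once in a component whose
index lies in `O`. -/
def fO (p : Phrase α) (O : Finset ℕ) : Phrase α :=
  ⟨p.word.filter (fun o => o.elim true (fun A => decide (∀ i ∈ O, A ∉ comp p i))), p.proj⟩

end Phrase

/-
Let `g` be the monotone retraction of `ℕ` onto the complement of `O` that sends `c` to the
largest index `≤ c` outside `O`. Moving every letter of component `c` to component `g c` only
changes how many separators stand between consecutive letters, so it keeps letters that are
adjacent in one component adjacent: it sends isomorphisms to isomorphisms and moves to moves,
and all of its values lie in `P(α, O)`. With suitable trailing padding it fixes every phrase of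
`P_n(α, O)` having a component outside `O`, so it turns a chain of moves from `p` to `p'` into
one inside `P(α, O)`. If all components of `p` are indexed by `O`, then `p` and `p'` consist of
the same number of separators and nothing else.
-/

namespace Phrase

/-- The largest index `≤ c` outside `O`, or the smallest index outside `O` if there is none. -/
noncomputable def retractCompl (O : Finset ℕ) (c : ℕ) : ℕ :=
  Nat.findGreatest (· ∉ O) (max c (Nat.find (Infinite.exists_notMem_finset O)))

section RetractCompl

variable (O : Finset ℕ)

lemma retractCompl_notMem (c : ℕ) : retractCompl O c ∉ O :=
  Nat.findGreatest_spec (P := (· ∉ O)) (le_max_right _ _)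
    (Nat.find_spec (Infinite.exists_notMem_finset O))

lemma monotone_retractCompl : Monotone (retractCompl O) :=
  fun _ _ hcd => Nat.findGreatest_mono_right _ (max_le_max_right _ hcd)

lemma retractCompl_of_notMem {c : ℕ} (hc : c ∉ O) : retractCompl O c = c := by
  rw [retractCompl, max_eq_left (Nat.find_min' _ hc)]
  exact Nat.findGreatest_eq hc

lemma retractCompl_le {c k : ℕ} (hk : k ≤ c) (hkO : k ∉ O) : retractCompl O c ≤ c := by
  rw [retractCompl, max_eq_left ((Nat.find_min' _ hkO).trans hk)]
  exact Nat.findGreatest_le c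

end RetractCompl

variable {α : Type} {O : Finset ℕ}

lemma compsOf_cons_none (w : List (Option ℕ)) : compsOf (none :: w) = [] :: compsOf w := by
  simp [compsOf, List.splitOn_cons_eq_if_modifyHead]

lemma compsOf_cons_some (a : ℕ) (w : List (Option ℕ)) :
    ∃ l ls, compsOf w = l :: ls ∧ compsOf (some a :: w) = (a :: l) :: ls := by
  obtain ⟨l, ls, h⟩ := List.exists_cons_of_ne_nil (List.splitOn_ne_nil none w)
  simp [compsOf, List.splitOn_cons_eq_if_modifyHead, h]

/-- No letter of `w` lies in a component indexed by `O`, when `w` is read as starting in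
component `c`. -/
def LettersAvoid (O : Finset ℕ) : ℕ → List (Option ℕ) → Prop
  | _, [] => True
  | c, none :: w => LettersAvoid O (c + 1) w
  | c, some _ :: w => c ∉ O ∧ LettersAvoid O c w

lemma lettersAvoid_iff {w : List (Option ℕ)} {c : ℕ} :
    LettersAvoid O c w ↔ ∀ i, c + i ∈ O → (compsOf w).getD i [] = [] := by
  induction w generalizing c with
  | nil =>
    simp only [LettersAvoid, true_iff]
    intro i _
    cases i <;> rfl
  | cons o w ih =>
    cases o with
    | none =>
      simp only [LettersAvoid, ih, compsOf_cons_none]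
      constructor
      · rintro h (_ | i) hi
        · rfl
        · exact h i (by rwa [Nat.add_right_comm, Nat.add_assoc])
      · intro h i hi
        exact h (i + 1) (by rwa [Nat.add_right_comm] at hi)
    | some a =>
      obtain ⟨l, ls, hw, haw⟩ := compsOf_cons_some a w
      simp only [LettersAvoid, ih, hw, haw]
      constructor
      · rintro ⟨hc, h⟩ (_ | i) hi
        · exact absurd hi hc
        · exact h (i + 1) hi
      · intro h
        refine ⟨fun hc => by simpa using h 0 hc, ?_⟩
        rintro (_ | i) hi
        · simpa using h 0 hi
        · exact h (i + 1) hi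

lemma inPO_iff {p : Phrase α} :
    InPO O p ↔ LettersAvoid O 0 p.word := by
  simp [InPO, comp, lettersAvoid_iff]

lemma lettersAvoid_append {x y : List (Option ℕ)} {c : ℕ} :
    LettersAvoid O c (x ++ y) ↔ LettersAvoid O c x ∧ LettersAvoid O (c + x.count none) y := by
  induction x generalizing c with
  | nil => simp [LettersAvoid]
  | cons o x ih =>
    cases o with
    | none => simp [LettersAvoid, ih, Nat.add_assoc, Nat.add_comm 1]
    | some a => simp [LettersAvoid, ih, and_assoc]

lemma lettersAvoid_replicate_none (c k : ℕ) :
    LettersAvoid O c (List.replicate k none) := by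
  induction k generalizing c with
  | zero => trivial
  | succ k ih => exact ih (c + 1)

lemma eq_replicate_of_lettersAvoid {w : List (Option ℕ)} {c : ℕ}
    (hw : LettersAvoid O c w) (hO : ∀ i, c ≤ i → i ≤ c + w.count none → i ∈ O) :
    w = List.replicate (w.count none) none := by
  induction w generalizing c with
  | nil => rfl
  | cons o w ih =>
    cases o with
    | none =>
      rw [List.count_cons_self, List.replicate_succ, ih hw fun i hi hi' => hO i (by omega)
        (by simp only [List.count_cons_self]; omega)]
      simp
    | some a => exact absurd (hO c le_rfl (by omega)) hw.1

lemma word_eq_replicate_of_inPO {p : Phrase α} (hp : InPO O p)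
    (hO : ∀ i ≤ p.word.count none, i ∈ O) : p.word = List.replicate (p.word.count none) none :=
  eq_replicate_of_lettersAvoid (inPO_iff.1 hp) fun i _ hi => hO i (by simpa using hi)

lemma isom_of_word_eq_replicate {p q : Phrase α} {k : ℕ}
    (hp : p.word = List.replicate k none) (hq : q.word = List.replicate k none) : Isom p q :=
  ⟨1, by simp [hp, hq], fun A hA => by simp [hp] at hA⟩

lemma Homotopy.count_none_eq {τ : α → α} {S : Set (α × α × α)} {p q : Phrase α}
    (h : Homotopy τ S p q) : p.word.count none = q.word.count none := by
  induction h with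
  | rel p q hpq =>
    rcases hpq with ⟨f, hw, -⟩ | ⟨-, ⟨x, y, A, hp, hq⟩ | ⟨x, y, z, A, B, -, hp, hq⟩ |
      ⟨x, y, z, t, A, B, C, -, hp, hq⟩⟩
    · rw [hw]
      exact (List.count_map_of_injective _ _ (Option.map_injective f.injective) none).symm
    all_goals simp [hp, hq]
  | refl => rfl
  | symm _ _ _ ih => exact ih.symm
  | trans _ _ _ _ _ ih₁ ih₂ => exact ih₁.trans ih₂

/-- The letters of component `c` of `w` are moved to component `g c`: for monotone `g`, the
separator between components `c` and `c + 1` becomes `g (c + 1) - g c` separators. -/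
def respaceFrom (g : ℕ → ℕ) : ℕ → List (Option ℕ) → List (Option ℕ)
  | _, [] => []
  | c, none :: w => List.replicate (g (c + 1) - g c) none ++ respaceFrom g (c + 1) w
  | c, some a :: w => some a :: respaceFrom g c w

/-- The trailing padding makes `respaceWord g w = w` whenever `g` fixes the components that
carry letters and `g` does not push the last component of `w` to the right. -/
def respaceWord (g : ℕ → ℕ) (w : List (Option ℕ)) : List (Option ℕ) :=
  List.replicate (g 0) none ++ respaceFrom g 0 w ++
    List.replicate (w.count none - g (w.count none)) none

def respace (g : ℕ → ℕ) (p : Phrase α) : Phrase α := ⟨respaceWord g p.word, p.proj⟩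

section Respace

variable {g : ℕ → ℕ}

lemma respaceFrom_append (x y : List (Option ℕ)) (c : ℕ) :
    respaceFrom g c (x ++ y) = respaceFrom g c x ++ respaceFrom g (c + x.count none) y := by
  induction x generalizing c with
  | nil => rfl
  | cons o x ih =>
    cases o with
    | none => simp [respaceFrom, ih, Nat.add_assoc, Nat.add_comm 1]
    | some a => simp [respaceFrom, ih]

lemma respaceFrom_map (f : ℕ → ℕ) (w : List (Option ℕ)) (c : ℕ) :
    respaceFrom g c (w.map (Option.map f)) = (respaceFrom g c w).map (Option.map f) := by
  induction w generalizing c with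
  | nil => rfl
  | cons o w ih => cases o <;> simp [respaceFrom, ih]

lemma mem_of_mem_respaceFrom {w : List (Option ℕ)} {c a : ℕ}
    (h : some a ∈ respaceFrom g c w) : some a ∈ w := by
  induction w generalizing c with
  | nil => simp [respaceFrom] at h
  | cons o w ih =>
    cases o with
    | none => simp only [respaceFrom, List.mem_append, List.mem_replicate] at h; aesop
    | some b => simp only [respaceFrom, List.mem_cons] at h; aesop

lemma lettersAvoid_respaceFrom (hg : Monotone g) (hgO : ∀ c, g c ∉ O)
    (w : List (Option ℕ)) (c : ℕ) : LettersAvoid O (g c) (respaceFrom g c w) := by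
  induction w generalizing c with
  | nil => trivial
  | cons o w ih =>
    cases o with
    | none =>
      rw [respaceFrom, lettersAvoid_append, List.count_replicate_self,
        Nat.add_sub_cancel' (hg c.le_succ)]
      exact ⟨lettersAvoid_replicate_none _ _, ih (c + 1)⟩
    | some a => exact ⟨hgO c, ih c⟩

lemma inPO_respace (hg : Monotone g) (hgO : ∀ c, g c ∉ O)
    (p : Phrase α) : InPO O (p.respace g) := by
  rw [inPO_iff]
  simp only [respace, respaceWord, lettersAvoid_append, List.count_replicate_self, zero_add]
  exact ⟨⟨lettersAvoid_replicate_none _ _, lettersAvoid_respaceFrom hg hgO p.word 0⟩,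
    lettersAvoid_replicate_none _ _⟩

lemma respaceFrom_eq_self (hg : Monotone g) (hfix : ∀ k ∉ O, g k = k)
    {w : List (Option ℕ)} {c : ℕ} (hw : LettersAvoid O c w)
    (hend : g (c + w.count none) ≤ c + w.count none) :
    List.replicate (g c) none ++ respaceFrom g c w ++
      List.replicate (c + w.count none - g (c + w.count none)) none =
      List.replicate c none ++ w := by
  induction w generalizing c with
  | nil =>
    simp only [respaceFrom, List.append_nil, ← List.replicate_add, List.count_nil,
      Nat.add_zero] at hend ⊢
    congr 1
    omega
  | cons o w ih =>
    cases o with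
    | none =>
      simp only [List.count_cons_self, ← Nat.add_assoc, Nat.add_right_comm c _ 1] at hend ⊢
      rw [respaceFrom, ← List.append_assoc, ← List.replicate_add,
        Nat.add_sub_cancel' (hg c.le_succ), ih hw hend, List.replicate_succ', List.append_assoc]
      rfl
    | some a =>
      have hgc : g c = c := hfix c hw.1
      have hcount : (some a :: w).count none = w.count none := by simp
      rw [hcount] at hend ⊢
      have := ih hw.2 hend
      rw [hgc] at this
      simp only [respaceFrom, List.append_assoc, List.cons_append] at this ⊢
      rw [hgc, List.append_cancel_left this]

lemma respaceWord_eq_self (hg : Monotone g) (hfix : ∀ k ∉ O, g k = k)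
    {w : List (Option ℕ)} (hw : LettersAvoid O 0 w) (hend : g (w.count none) ≤ w.count none) :
    respaceWord g w = w := by
  simpa [respaceWord, List.append_assoc] using
    respaceFrom_eq_self hg hfix hw (by simpa using hend)

lemma respace_eq_self (hg : Monotone g) (hfix : ∀ k ∉ O, g k = k) {p : Phrase α}
    (hp : InPO O p) (hend : g (p.word.count none) ≤ p.word.count none) : p.respace g = p := by
  rw [respace, respaceWord_eq_self hg hfix (inPO_iff.1 hp) hend]

lemma Isom.respace {p q : Phrase α} (h : Isom p q) :
    Isom (p.respace g) (q.respace g) := by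
  obtain ⟨f, hw, hproj⟩ := h
  refine ⟨f, ?_, fun A hA => hproj A ?_⟩
  · have hcount : (p.word.map (Option.map f)).count none = p.word.count none :=
      List.count_map_of_injective _ _ (Option.map_injective f.injective) none
    simp [Phrase.respace, respaceWord, hw, hcount, respaceFrom_map, List.map_replicate]
  · simp only [Phrase.respace, respaceWord, List.mem_append, List.mem_replicate] at hA
    rcases hA with (hA | hA) | hA
    · simp at hA
    · exact mem_of_mem_respaceFrom hA
    · simp at hA

lemma Move.respace {τ : α → α} {S : Set (α × α × α)} {p q : Phrase α}
    (h : Move τ S p q) : Move τ S (p.respace g) (q.respace g) := by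
  obtain ⟨hproj, ⟨x, y, A, hp, hq⟩ | ⟨x, y, z, A, B, hAB, hp, hq⟩ |
    ⟨x, y, z, t, A, B, C, hABC, hp, hq⟩⟩ := h
  · refine ⟨hproj, Or.inl ⟨List.replicate (g 0) none ++ respaceFrom g 0 x,
      respaceFrom g (x.count none) y ++ List.replicate
        (p.word.count none - g (p.word.count none)) none, A, ?_, ?_⟩⟩ <;>
    simp [Phrase.respace, respaceWord, hp, hq, respaceFrom_append, respaceFrom]
  · refine ⟨hproj, Or.inr <| Or.inl ⟨List.replicate (g 0) none ++ respaceFrom g 0 x,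
      respaceFrom g (x.count none) y,
      respaceFrom g (x.count none + y.count none) z ++ List.replicate
        (p.word.count none - g (p.word.count none)) none, A, B, hAB, ?_, ?_⟩⟩ <;>
    simp [Phrase.respace, respaceWord, hp, hq, respaceFrom_append, respaceFrom]
  · refine ⟨hproj, Or.inr <| Or.inr ⟨List.replicate (g 0) none ++ respaceFrom g 0 x,
      respaceFrom g (x.count none) y,
      respaceFrom g (x.count none + y.count none) z,
      respaceFrom g (x.count none + y.count none + z.count none) t ++ List.replicate
        (p.word.count none - g (p.word.count none)) none, A, B, C, hABC, ?_, ?_⟩⟩ <;>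
    simp [Phrase.respace, respaceWord, hp, hq, respaceFrom_append, respaceFrom, Nat.add_assoc]

lemma Homotopy.homotopyO_respace {τ : α → α} {S : Set (α × α × α)}
    (hg : Monotone g) (hgO : ∀ c, g c ∉ O) {p q : Phrase α} (h : Homotopy τ S p q) :
    HomotopyO τ S O (p.respace g) (q.respace g) := by
  induction h with
  | rel p q hpq =>
    exact .rel _ _ ⟨hpq.imp Isom.respace Move.respace,
      inPO_respace hg hgO p, inPO_respace hg hgO q⟩
  | refl => exact .refl _
  | symm _ _ _ ih => exact .symm _ _ ih
  | trans _ _ _ _ _ ih₁ ih₂ => exact .trans _ _ _ ih₁ ih₂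

end Respace

end Phrase

open Phrase in
theorem stmt1_general {α : Type}
    (τ : α → α) (S : Set (α × α × α))
    (O : Finset ℕ)
    (p p' : Phrase α)
    (hp : InPO O p) (hp' : InPO O p')
    (h : Homotopy τ S p p') :
    HomotopyO τ S O p p' := by
  have hcount := h.count_none_eq
  by_cases hroom : ∃ k ≤ p.word.count none, k ∉ O
  · obtain ⟨k, hk, hkO⟩ := hroom
    have hmono := monotone_retractCompl O
    have hfix : ∀ c ∉ O, retractCompl O c = c := fun c => retractCompl_of_notMem O
    have key := h.homotopyO_respace hmono (retractCompl_notMem O)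
    rwa [respace_eq_self hmono hfix hp (retractCompl_le O hk hkO),
      respace_eq_self hmono hfix hp' (retractCompl_le O (hcount ▸ hk) hkO)] at key
  · push Not at hroom
    have hw := word_eq_replicate_of_inPO hp hroom
    have hw' := word_eq_replicate_of_inPO hp' (hcount ▸ hroom)
    rw [← hcount] at hw'
    exact .rel _ _ ⟨.inl (isom_of_word_eq_replicate hw hw'), hp, hp'⟩

open Phrase in
/-- if `p, p' ∈ P_n(α, O)` and `p ∼ p'`, then `p ∼_O p'`. -/
theorem stmt1 {α : Type} [Finite α] [Nonempty α]
    (τ : α → α) (hτ : ∀ a : α, τ (τ a) = a) (S : Set (α × α × α))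
    (n : ℕ) (O : Finset ℕ) (hO : ∀ i ∈ O, i < n)
    (p p' : Phrase α) (hg : p.IsGauss) (hg' : p'.IsGauss)
    (hn : p.numComps = n) (hn' : p'.numComps = n)
    (hp : InPO O p) (hp' : InPO O p')
    (h : Homotopy τ S p p') :
    HomotopyO τ S O p p' :=
  stmt1_general τ S O p p' hp hp' h
end

section
/- Suppose the homotopy data triple h is (isomorphic to) the product of homotopy data triples f and g, and suppose k is a prime factor of h. Then k is a factor of f or a factor of g. -/
/-!
A factor `β` of `f × g` carrying a prime `k` cannot meet both summands: since the summand `f`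
is itself a `τ`-invariant set along which `S` splits, intersecting it with `β` would give a
proper factor of `k`. So `β` lies in one summand, and a factor of `f × g` contained in the
summand `f` is a factor of `f`.
-/

/-- A homotopy data triple: a finite set `α` (here: a finite type), an involution `τ`
on it, and a subset `S ⊆ α × α × α`. -/
structure HDT where
  carrier : Type
  finite : Finite carrier
  tau : carrier → carrier
  tau_inv : ∀ a, tau (tau a) = a
  S : Set (carrier × carrier × carrier)

namespace HDT

/-- Isomorphism of homotopy data triples. -/
def Iso (f g : HDT) : Prop :=
  ∃ e : f.carrier ≃ g.carrier,
    (∀ a, e (f.tau a) = g.tau (e a)) ∧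
    (∀ a b c, (a, b, c) ∈ f.S ↔ (e a, e b, e c) ∈ g.S)

/-- The restriction of a homotopy data triple to a `τ`-invariant subset `β`:
the triple `(β, τ|β, S ∩ β³)`. -/
def restrict (h : HDT) (β : Set h.carrier) (hβ : ∀ a ∈ β, h.tau a ∈ β) : HDT where
  carrier := { a : h.carrier // a ∈ β }
  finite := by haveI := h.finite; exact Subtype.finite
  tau := fun x => ⟨h.tau x.1, hβ x.1 x.2⟩
  tau_inv := fun x => Subtype.ext (h.tau_inv x.1)
  S := { t | (t.1.1, t.2.1.1, t.2.2.1) ∈ h.S }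

/-- `S` splits along `β`: every triple of `S` lies entirely in `β³` or entirely in
`(α − β)³`. -/
def Splits (h : HDT) (β : Set h.carrier) : Prop :=
  ∀ t ∈ h.S, (t.1 ∈ β ∧ t.2.1 ∈ β ∧ t.2.2 ∈ β) ∨ (t.1 ∉ β ∧ t.2.1 ∉ β ∧ t.2.2 ∉ β)

/-- `k` is a factor of `h`: `k` is (isomorphic to) the restriction of `h` to some
`τ`-invariant subset `β` along which `S` splits. -/
def IsFactorOf (k h : HDT) : Prop :=
  ∃ (β : Set h.carrier) (hβ : ∀ a ∈ β, h.tau a ∈ β),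
    h.Splits β ∧ Iso k (h.restrict β hβ)

/-- A homotopy data triple is composite if it has a proper factor. -/
def IsComposite (h : HDT) : Prop :=
  ∃ β : Set h.carrier,
    (∀ a ∈ β, h.tau a ∈ β) ∧ h.Splits β ∧ β.Nonempty ∧ β ≠ Set.univ

/-- A homotopy data triple is prime if its underlying set is nonempty and it has no
proper factor. -/
def IsPrime (h : HDT) : Prop := Nonempty h.carrier ∧ ¬ h.IsComposite

/-- The product of two homotopy data triples (carried by the disjoint union of the
underlying sets). -/
def prod (f g : HDT) : HDT where
  carrier := f.carrier ⊕ g.carrier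
  finite := by haveI := f.finite; haveI := g.finite; exact inferInstance
  tau := Sum.map f.tau g.tau
  tau_inv := by
    intro a
    cases a with
    | inl x => simp [Sum.map, f.tau_inv]
    | inr x => simp [Sum.map, g.tau_inv]
  S := { t |
    (∃ a b c, (a, b, c) ∈ f.S ∧ t = (Sum.inl a, Sum.inl b, Sum.inl c)) ∨
    (∃ a b c, (a, b, c) ∈ g.S ∧ t = (Sum.inr a, Sum.inr b, Sum.inr c)) }

/-- The unit for the product: the empty homotopy data triple. -/
def unit : HDT where
  carrier := Empty
  finite := inferInstance
  tau := id
  tau_inv := fun a => rfl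
  S := ∅

/-- The product of a finite list of homotopy data triples. -/
def listProd : List HDT → HDT
  | [] => unit
  | h :: t => h.prod (listProd t)

end HDT

namespace HDT

namespace Iso

variable {a b c : HDT}

lemma trans (hab : Iso a b) (hbc : Iso b c) : Iso a c := by
  obtain ⟨e₁, htau₁, hS₁⟩ := hab
  obtain ⟨e₂, htau₂, hS₂⟩ := hbc
  exact ⟨e₁.trans e₂, fun x => by simp [htau₁, htau₂], fun x y z => (hS₁ x y z).trans (hS₂ _ _ _)⟩

lemma symm (hab : Iso a b) : Iso b a := by
  obtain ⟨e, htau, hS⟩ := hab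
  refine ⟨e.symm, fun x => e.injective ?_, fun x y z => ?_⟩
  · simp [htau]
  · simp [hS]

lemma isComposite (hab : Iso a b) (hb : b.IsComposite) : a.IsComposite := by
  obtain ⟨e, htau, hS⟩ := hab
  obtain ⟨β, hβ, hsplit, ⟨y, hy⟩, hproper⟩ := hb
  refine ⟨e ⁻¹' β, fun x hx => ?_, fun t ht => hsplit _ ((hS _ _ _).mp ht), ⟨e.symm y, ?_⟩, ?_⟩
  · simpa [Set.mem_preimage, htau] using hβ _ hx
  · simpa using hy
  · rwa [Ne, Set.preimage_eq_univ_iff, e.range_eq_univ, Set.univ_subset_iff]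

lemma trans_isFactorOf {k h : HDT} (hk : Iso k a) (ha : a.IsFactorOf h) : k.IsFactorOf h := by
  obtain ⟨β, hβ, hsplit, hiso⟩ := ha
  exact ⟨β, hβ, hsplit, hk.trans hiso⟩

end Iso

lemma IsFactorOf.trans_iso {k h h' : HDT} (hk : k.IsFactorOf h) (hh : Iso h h') :
    k.IsFactorOf h' := by
  obtain ⟨e, htau, hS⟩ := hh.symm
  obtain ⟨β, hβ, hsplit, hiso⟩ := hk
  refine ⟨e ⁻¹' β, fun x hx => ?_, fun t ht => hsplit _ ((hS _ _ _).mp ht), ?_⟩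
  · simpa [Set.mem_preimage, htau] using hβ _ hx
  · exact hiso.trans (Iso.symm ⟨e.subtypeEquiv fun _ => Iff.rfl, fun x => Subtype.ext (htau x.1),
    fun x y z => hS x.1 y.1 z.1⟩)

section Restrict

variable {h : HDT} {β γ : Set h.carrier}

lemma splits_restrict (hβ : ∀ a ∈ β, h.tau a ∈ β) (hγ : h.Splits γ) :
    (h.restrict β hβ).Splits {x | x.1 ∈ γ} :=
  fun _ ht => hγ _ ht

lemma isFactorOf_restrict_of_subset (hβ : ∀ a ∈ β, h.tau a ∈ β) (hγ : ∀ a ∈ γ, h.tau a ∈ γ)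
    (hsplit : h.Splits β) (hβγ : β ⊆ γ) :
    (h.restrict β hβ).IsFactorOf (h.restrict γ hγ) :=
  ⟨{x | x.1 ∈ β}, fun x hx => hβ x.1 hx, splits_restrict hγ hsplit,
    Iso.symm ⟨Equiv.subtypeSubtypeEquivSubtype fun hx => hβγ hx, fun _ => rfl,
      fun _ _ _ => Iff.rfl⟩⟩

lemma isComposite_restrict (hβ : ∀ a ∈ β, h.tau a ∈ β) (hγ : ∀ a ∈ γ, h.tau a ∈ γ)
    (hsplit : h.Splits γ) {x y : h.carrier} (hx : x ∈ β) (hxγ : x ∈ γ) (hy : y ∈ β)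
    (hyγ : y ∉ γ) : (h.restrict β hβ).IsComposite :=
  ⟨{z | z.1 ∈ γ}, fun z hz => hγ z.1 hz, splits_restrict hβ hsplit, ⟨⟨x, hx⟩, hxγ⟩,
    Set.ne_univ_iff_exists_notMem _ |>.mpr ⟨⟨y, hy⟩, hyγ⟩⟩

lemma subset_or_subset_compl_of_isPrime {k : HDT} (hk : k.IsPrime) (hβ : ∀ a ∈ β, h.tau a ∈ β)
    (hkβ : Iso k (h.restrict β hβ)) (hγ : ∀ a ∈ γ, h.tau a ∈ γ) (hsplit : h.Splits γ) :
    β ⊆ γ ∨ β ⊆ γᶜ := by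
  by_contra! hmeets
  rw [Set.not_subset, Set.not_subset] at hmeets
  obtain ⟨⟨y, hy, hyγ⟩, ⟨x, hx, hxγ⟩⟩ := hmeets
  exact hk.2 (hkβ.isComposite (isComposite_restrict hβ hγ hsplit hx (not_not.mp hxγ) hy hyγ))

end Restrict

section Prod

variable (f g : HDT)

lemma mem_prod_S_inl {a b c : f.carrier} :
    (Sum.inl a, Sum.inl b, Sum.inl c) ∈ (f.prod g).S ↔ (a, b, c) ∈ f.S := by
  refine ⟨?_, fun hS => .inl ⟨a, b, c, hS, rfl⟩⟩
  rintro (⟨a', b', c', hS, heq⟩ | ⟨_, _, _, -, heq⟩) <;> cases heq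
  exact hS

lemma mem_prod_S_inr {a b c : g.carrier} :
    (Sum.inr a, Sum.inr b, Sum.inr c) ∈ (f.prod g).S ↔ (a, b, c) ∈ g.S := by
  refine ⟨?_, fun hS => .inr ⟨a, b, c, hS, rfl⟩⟩
  rintro (⟨_, _, _, -, heq⟩ | ⟨a', b', c', hS, heq⟩) <;> cases heq
  exact hS

lemma tau_mem_range_inl : ∀ x ∈ Set.range Sum.inl, (f.prod g).tau x ∈ Set.range Sum.inl := by
  rintro _ ⟨a, rfl⟩
  exact ⟨f.tau a, rfl⟩

lemma tau_mem_range_inr : ∀ x ∈ Set.range Sum.inr, (f.prod g).tau x ∈ Set.range Sum.inr := by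
  rintro _ ⟨a, rfl⟩
  exact ⟨g.tau a, rfl⟩

lemma splits_range_inl : (f.prod g).Splits (Set.range Sum.inl) := by
  rintro t (⟨a, b, c, -, rfl⟩ | ⟨a, b, c, -, rfl⟩)
  · exact .inl ⟨⟨a, rfl⟩, ⟨b, rfl⟩, ⟨c, rfl⟩⟩
  · exact .inr ⟨fun ⟨_, h⟩ => Sum.inl_ne_inr h, fun ⟨_, h⟩ => Sum.inl_ne_inr h,
      fun ⟨_, h⟩ => Sum.inl_ne_inr h⟩

lemma iso_restrict_range_inl : Iso f ((f.prod g).restrict _ (tau_mem_range_inl f g)) :=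
  ⟨Equiv.ofInjective _ Sum.inl_injective, fun _ => rfl,
    fun _ _ _ => (mem_prod_S_inl f g).symm⟩

lemma iso_restrict_range_inr : Iso g ((f.prod g).restrict _ (tau_mem_range_inr f g)) :=
  ⟨Equiv.ofInjective _ Sum.inr_injective, fun _ => rfl,
    fun _ _ _ => (mem_prod_S_inr f g).symm⟩

end Prod

end HDT

/-- if `h` is (isomorphic to) the product of `f` and `g` and `k` is a prime
factor of `h`, then `k` is a factor of `f` or of `g`. -/
theorem stmt6 (f g h k : HDT) (hiso : h.Iso (f.prod g)) (hk : k.IsPrime)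
    (hfac : k.IsFactorOf h) :
    k.IsFactorOf f ∨ k.IsFactorOf g := by
  obtain ⟨β, hβ, hsplit, hkβ⟩ := hfac.trans_iso hiso
  rcases HDT.subset_or_subset_compl_of_isPrime hk hβ hkβ (HDT.tau_mem_range_inl f g)
    (HDT.splits_range_inl f g) with hinl | hinr
  · refine .inl (hkβ.trans_isFactorOf ?_)
    exact (HDT.isFactorOf_restrict_of_subset hβ _ hsplit hinl).trans_iso
      (HDT.iso_restrict_range_inl f g).symm
  · refine .inr (hkβ.trans_isFactorOf ?_)
    exact (HDT.isFactorOf_restrict_of_subset hβ _ hsplit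
      (hinr.trans Set.compl_range_inl.subset)).trans_iso (HDT.iso_restrict_range_inr f g).symm
end

section
/- Let (α,τ_α,S_α) be a homotopy data triple and let (β,τ_β,S_β) be a factor of (α,τ_α,S_α). Write ∼_α for the homotopy of nanophrases given by (α,τ_α,S_α) and ∼_β for the homotopy given by (β,τ_β,S_β). If p and p′ are nanophrases over β and p ∼_α p′ (regarding them as nanophrases over α), then p ∼_β p′. -/
namespace Phrase

variable {α : Type}

/-- `p` is a phrase over the subset `β ⊆ α`: every occurring letter projects into `β`. -/
def PhraseOver (β : Set α) (p : Phrase α) : Prop :=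
  ∀ A : ℕ, some A ∈ p.word → p.proj A ∈ β

/-- The homotopy of nanophrases over the subset `β ⊆ α` (for a factor `(β, τ|β, S∩β³)`
this is the homotopy given by that factor): generated by isomorphisms and moves relating
phrases over `β`. -/
def HomotopyOn (τ : α → α) (S : Set (α × α × α)) (β : Set α) :
    Phrase α → Phrase α → Prop :=
  Relation.EqvGen (fun p q => (Isom p q ∨ Move τ S p q) ∧ PhraseOver β p ∧ PhraseOver β q)

end Phrase

/-! Erase from a phrase every letter projecting outside `β`. Isomorphisms survive the erasure,
and so do the moves: since `β` is `τ`-invariant and every triple of `S` lies inside `β` or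
outside it, the letters of a move lie either all in `β`, and then the move survives, or all
outside `β`, and then it is erased. As phrases over `β` are fixed by the erasure, a homotopy
over `α` between them is carried to one over `β`. -/

theorem Relation.EqvGen.map_of_reflGen {X Y : Type*} {r : X → X → Prop} {s : Y → Y → Prop}
    (f : X → Y) (h : ∀ a b, r a b → Relation.ReflGen s (f a) (f b)) {a b : X}
    (hab : Relation.EqvGen r a b) : Relation.EqvGen s (f a) (f b) := by
  induction hab with
  | rel a b hr => exact Relation.EqvGen.reflGen_le_eqvGen _ _ _ (h a b hr)
  | refl a => exact .refl _
  | symm a b _ ih => exact .symm _ _ ih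
  | trans a b c _ _ ih₁ ih₂ => exact .trans _ _ _ ih₁ ih₂

namespace Phrase

variable {α : Type} {β : Set α}

@[ext]
theorem ext {p q : Phrase α} (hw : p.word = q.word) (hp : p.proj = q.proj) : p = q := by
  cases p; cases q; congr

open Classical in
noncomputable def keeps (β : Set α) (proj : ℕ → α) (o : Option ℕ) : Bool :=
  o.all fun A => decide (proj A ∈ β)

@[simp]
theorem keeps_none (proj : ℕ → α) : keeps β proj none = true := rfl

open Classical in
@[simp]
theorem keeps_some (proj : ℕ → α) (A : ℕ) : keeps β proj (some A) = decide (proj A ∈ β) := rfl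

/-- Separators are always kept, so the components of `p` survive with their letters outside
`β` erased. -/
noncomputable def restrict (β : Set α) (p : Phrase α) : Phrase α where
  word := p.word.filter (keeps β p.proj)
  proj := p.proj

theorem phraseOver_restrict (p : Phrase α) : PhraseOver β (restrict β p) := fun A hA => by
  simpa [restrict] using List.of_mem_filter hA

theorem restrict_eq_self {p : Phrase α} (hp : PhraseOver β p) : restrict β p = p := by
  ext1
  · refine List.filter_eq_self.2 fun o ho => ?_
    cases o with
    | none => rfl
    | some A => simpa using hp A ho
  · rfl

theorem isom_restrict {p q : Phrase α} (h : Isom p q) : Isom (restrict β p) (restrict β q) := by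
  obtain ⟨f, hword, hproj⟩ := h
  refine ⟨f, ?_, fun A hA => hproj A (List.mem_of_mem_filter hA)⟩
  simp only [restrict, hword, List.filter_map]
  congr 1
  refine List.filter_congr fun o ho => ?_
  cases o with
  | none => rfl
  | some A => simp [hproj A ho]

theorem move_restrict_or_eq {τ : α → α} {S : Set (α × α × α)}
    (hτ : ∀ a : α, τ (τ a) = a) (hβτ : ∀ a ∈ β, τ a ∈ β)
    (hβS : ∀ t ∈ S,
      (t.1 ∈ β ∧ t.2.1 ∈ β ∧ t.2.2 ∈ β) ∨ (t.1 ∉ β ∧ t.2.1 ∉ β ∧ t.2.2 ∉ β))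
    {p q : Phrase α} (h : Move τ S p q) :
    Move τ S (restrict β p) (restrict β q) ∨ restrict β p = restrict β q := by
  obtain ⟨hproj, hmove⟩ := h
  have hkeeps : keeps β q.proj = keeps β p.proj := by rw [hproj]
  rcases hmove with ⟨x, y, A, hp, hq⟩ | ⟨x, y, z, A, B, hAB, hp, hq⟩ |
      ⟨x, y, z, t, A, B, C, hS, hp, hq⟩
  · by_cases hA : p.proj A ∈ β
    · refine .inl ⟨hproj, .inl ⟨x.filter (keeps β p.proj), y.filter (keeps β p.proj), A,
        ?_, ?_⟩⟩ <;>
        simp [restrict, hkeeps, hp, hq, List.filter_append, hA]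
    · exact .inr (Phrase.ext (by simp [restrict, hkeeps, hp, hq, List.filter_append, hA])
        hproj.symm)
  · have hB : p.proj B ∈ β ↔ p.proj A ∈ β :=
      ⟨fun hB => hτ (p.proj A) ▸ hAB ▸ hβτ _ hB, fun hA => hAB ▸ hβτ _ hA⟩
    by_cases hA : p.proj A ∈ β
    · refine .inl ⟨hproj, .inr <| .inl ⟨x.filter (keeps β p.proj), y.filter (keeps β p.proj),
        z.filter (keeps β p.proj), A, B, hAB, ?_, ?_⟩⟩ <;>
        simp [restrict, hkeeps, hp, hq, List.filter_append, hA, hB]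
    · exact .inr (Phrase.ext (by simp [restrict, hkeeps, hp, hq, List.filter_append, hA, hB])
        hproj.symm)
  · rcases hβS _ hS with ⟨hA, hB, hC⟩ | ⟨hA, hB, hC⟩
    · refine .inl ⟨hproj, .inr <| .inr ⟨x.filter (keeps β p.proj), y.filter (keeps β p.proj),
        z.filter (keeps β p.proj), t.filter (keeps β p.proj), A, B, C, hS, ?_, ?_⟩⟩ <;>
        simp [restrict, hkeeps, hp, hq, List.filter_append, hA, hB, hC]
    · exact .inr (Phrase.ext
        (by simp [restrict, hkeeps, hp, hq, List.filter_append, hA, hB, hC]) hproj.symm)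

theorem homotopyOn_restrict {τ : α → α} {S : Set (α × α × α)}
    (hτ : ∀ a : α, τ (τ a) = a) (hβτ : ∀ a ∈ β, τ a ∈ β)
    (hβS : ∀ t ∈ S,
      (t.1 ∈ β ∧ t.2.1 ∈ β ∧ t.2.2 ∈ β) ∨ (t.1 ∉ β ∧ t.2.1 ∉ β ∧ t.2.2 ∉ β))
    {p q : Phrase α} (h : Homotopy τ S p q) :
    HomotopyOn τ S β (restrict β p) (restrict β q) := by
  refine Relation.EqvGen.map_of_reflGen (restrict β) (fun p q hpq => ?_) h
  rcases hpq with hiso | hmove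
  · exact .single ⟨.inl (isom_restrict hiso), phraseOver_restrict p, phraseOver_restrict q⟩
  · rcases move_restrict_or_eq hτ hβτ hβS hmove with hmove | heq
    · exact .single ⟨.inr hmove, phraseOver_restrict p, phraseOver_restrict q⟩
    · exact heq ▸ .refl

end Phrase

open Phrase in
theorem stmt10_general {α : Type}
    (τ : α → α) (hτ : ∀ a : α, τ (τ a) = a) (S : Set (α × α × α))
    (β : Set α) (hβτ : ∀ a ∈ β, τ a ∈ β)
    (hβS : ∀ t ∈ S,
      (t.1 ∈ β ∧ t.2.1 ∈ β ∧ t.2.2 ∈ β) ∨ (t.1 ∉ β ∧ t.2.1 ∉ β ∧ t.2.2 ∉ β))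
    (p p' : Phrase α)
    (hpβ : PhraseOver β p) (hp'β : PhraseOver β p')
    (h : Homotopy τ S p p') :
    HomotopyOn τ S β p p' := by
  simpa only [restrict_eq_self hpβ, restrict_eq_self hp'β] using
    homotopyOn_restrict hτ hβτ hβS h

open Phrase in
/-- for a factor `(β, τ|β, S∩β³)` of `(α, τ, S)`, nanophrases over `β`
that are homotopic over `α` are already homotopic over `β`. -/
theorem stmt10 {α : Type} [Finite α] [Nonempty α]
    (τ : α → α) (hτ : ∀ a : α, τ (τ a) = a) (S : Set (α × α × α))
    (β : Set α) (hβτ : ∀ a ∈ β, τ a ∈ β)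
    (hβS : ∀ t ∈ S,
      (t.1 ∈ β ∧ t.2.1 ∈ β ∧ t.2.2 ∈ β) ∨ (t.1 ∉ β ∧ t.2.1 ∉ β ∧ t.2.2 ∉ β))
    (p p' : Phrase α) (hg : p.IsGauss) (hg' : p'.IsGauss)
    (hpβ : PhraseOver β p) (hp'β : PhraseOver β p')
    (h : Homotopy τ S p p') :
    HomotopyOn τ S β p p' :=
  stmt10_general τ hτ S β hβτ hβS p p' hpβ hp'β h
end

section
/- Let (α,τ,S_∅) be a homotopy data triple in which S_∅ is the empty set, and consider the homotopy it gives (so only moves H1 and H2 occur). Let p be a nanophrase over α and suppose p₁ and p₂ are the results of applying two different reducing moves to p. Then there exists a nanophrase p′ such that p₁ ≥ p′ and p₂ ≥ p′, where q ≥ r means that r is equal (up to isomorphism) to q or is derivable from q by a sequence of reducing moves. -/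
namespace Phrase

variable {α : Type}

/-- A reducing move for the homotopy with `S = ∅`: an application of H1 or H2 in the
direction that removes letters. -/
def RMove (τ : α → α) (p q : Phrase α) : Prop :=
  q.proj = p.proj ∧
  ((∃ (x y : List (Option ℕ)) (A : ℕ),
      p.word = x ++ some A :: some A :: y ∧ q.word = x ++ y) ∨
   (∃ (x y z : List (Option ℕ)) (A B : ℕ),
      τ (p.proj A) = p.proj B ∧
      p.word = x ++ some A :: some B :: (y ++ some B :: some A :: z) ∧
      q.word = x ++ (y ++ z)))

/-- `q ≥ r`: `r` is equal to `q` up to isomorphism, or derivable from `q` by a sequence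
of reducing moves (and isomorphisms). -/
def Ge (τ : α → α) : Phrase α → Phrase α → Prop :=
  Relation.ReflTransGen (fun a b => RMove τ a b ∨ Isom a b)

end Phrase

/-!
On a Gauss phrase a reducing move deletes both occurrences of its letters (`{A}` for H1,
`{A, B}` for H2), so its result is the phrase with those letters filtered out. Hence two moves
deleting disjoint letter sets commute, and two moves deleting the same set agree. The Gauss
condition leaves only two genuine overlaps: an H1 on `B` inside an H2 pattern `A B B A` leaves
`A A`, which H1 removes; and the H2 moves on `C A B ⋯ B A C` (with `τ C = A`, `τ A = B`) leave
`C ⋯ C` and `B ⋯ B`, which differ by the renaming `C ↔ B`, an isomorphism because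
`|C| = τ (τ |C|) = |B|`.
-/

namespace List

variable {γ : Type*} [BEq γ] [LawfulBEq γ] {a : γ} {x y z x' y' z' r r' : List γ}

theorem append_cons_inj_of_notMem_left (hx : a ∉ x) (hx' : a ∉ x')
    (h : x ++ a :: r = x' ++ a :: r') : x = x' ∧ r = r' := by
  have hlen : x.length = x'.length := by
    simpa [idxOf_append_of_notMem hx, idxOf_append_of_notMem hx'] using congrArg (idxOf a) h
  obtain ⟨rfl, hr⟩ := append_inj h hlen
  exact ⟨rfl, (cons_inj_right a).1 hr⟩

theorem notMem_of_count_le_two (h : count a (x ++ a :: (y ++ a :: z)) ≤ 2) :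
    a ∉ x ∧ a ∉ y ∧ a ∉ z := by
  simp only [count_append, count_cons_self] at h
  exact ⟨count_eq_zero.1 (by omega), count_eq_zero.1 (by omega), count_eq_zero.1 (by omega)⟩

theorem eq_of_count_le_two (h : count a (x ++ a :: (y ++ a :: z)) ≤ 2)
    (he : x ++ a :: (y ++ a :: z) = x' ++ a :: (y' ++ a :: z')) : x = x' ∧ y = y' ∧ z = z' := by
  obtain ⟨hx, hy, -⟩ := notMem_of_count_le_two h
  obtain ⟨hx', hy', -⟩ := notMem_of_count_le_two (he ▸ h)
  obtain ⟨rfl, htail⟩ := append_cons_inj_of_notMem_left hx hx' he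
  obtain ⟨rfl, rfl⟩ := append_cons_inj_of_notMem_left hy hy' htail
  exact ⟨rfl, rfl, rfl⟩

end List

namespace Phrase

variable {α : Type} {τ : α → α} {p q p₁ p₂ : Phrase α} {D D₁ D₂ E : Finset ℕ}
  {x y z x' y' z' : List (Option ℕ)} {A B C : ℕ}

theorem IsGauss.count_le_two (hg : p.IsGauss) (A : ℕ) : p.word.count (some A) ≤ 2 :=
  (hg A).elim (fun h => h.trans_le zero_le_two) le_of_eq

theorem IsGauss.notMem_of_word_eq (hg : p.IsGauss)
    (hw : p.word = x ++ some A :: (y ++ some A :: z)) : some A ∉ x ∧ some A ∉ y ∧ some A ∉ z :=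
  List.notMem_of_count_le_two (hw ▸ hg.count_le_two A)

theorem IsGauss.eq_of_word_eq (hg : p.IsGauss) (hw : p.word = x ++ some A :: (y ++ some A :: z))
    (hw' : p.word = x' ++ some A :: (y' ++ some A :: z')) : x = x' ∧ y = y' ∧ z = z' :=
  List.eq_of_count_le_two (hw ▸ hg.count_le_two A) (hw.symm.trans hw')

inductive Reduces (τ : α → α) (p : Phrase α) : Finset ℕ → Phrase α → Prop
  | h1 (x y : List (Option ℕ)) (A : ℕ) (hw : p.word = x ++ some A :: some A :: y) :
      Reduces τ p {A} ⟨x ++ y, p.proj⟩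
  | h2 (x y z : List (Option ℕ)) (A B : ℕ) (hAB : τ (p.proj A) = p.proj B)
      (hw : p.word = x ++ some A :: some B :: (y ++ some B :: some A :: z)) :
      Reduces τ p {A, B} ⟨x ++ (y ++ z), p.proj⟩

theorem rMove_iff_exists_reduces : RMove τ p q ↔ ∃ D, Reduces τ p D q := by
  constructor
  · obtain ⟨w, f⟩ := q
    rintro ⟨rfl, ⟨x, y, A, hw, rfl⟩ | ⟨x, y, z, A, B, hAB, hw, rfl⟩⟩
    exacts [⟨_, .h1 x y A hw⟩, ⟨_, .h2 x y z A B hAB hw⟩]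
  · rintro ⟨D, ⟨x, y, A, hw⟩ | ⟨x, y, z, A, B, hAB, hw⟩⟩
    exacts [⟨rfl, .inl ⟨x, y, A, hw, rfl⟩⟩, ⟨rfl, .inr ⟨x, y, z, A, B, hAB, hw, rfl⟩⟩]

theorem Reduces.ge (h : Reduces τ p D q) : Ge τ p q :=
  .single (.inl (rMove_iff_exists_reduces.2 ⟨D, h⟩))

theorem Isom.ge (h : Isom p q) : Ge τ p q :=
  .single (.inr h)

def eraseLetters (D : Finset ℕ) (p : Phrase α) : Phrase α :=
  ⟨p.word.filter fun o => o.all (· ∉ D), p.proj⟩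

theorem filter_all_notMem_eq_self {l : List (Option ℕ)} (hl : ∀ a ∈ D, some a ∉ l) :
    l.filter (fun o => o.all (· ∉ D)) = l :=
  List.filter_eq_self.2 fun
    | none, _ => rfl
    | some a, ha => decide_eq_true fun haD => hl a haD ha

theorem eraseLetters_comm :
    (p.eraseLetters D).eraseLetters E = (p.eraseLetters E).eraseLetters D := by
  simp only [eraseLetters, List.filter_filter, Bool.and_comm]

theorem Reduces.eq_eraseLetters (hg : p.IsGauss) (h : Reduces τ p D q) :
    q = p.eraseLetters D := by
  cases h with
  | h1 x y A hw =>
    obtain ⟨hx, -, hy⟩ :=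
      hg.notMem_of_word_eq (A := A) (x := x) (y := []) (z := y) (hw.trans (by simp))
    have hx' : ∀ a ∈ ({A} : Finset ℕ), some a ∉ x := by simpa using hx
    have hy' : ∀ a ∈ ({A} : Finset ℕ), some a ∉ y := by simpa using hy
    simp only [eraseLetters, hw, List.filter_append, List.filter_cons,
      filter_all_notMem_eq_self hx', filter_all_notMem_eq_self hy']
    simp
  | h2 x y z A B _ hw =>
    obtain ⟨hAx, hAy, hAz⟩ := hg.notMem_of_word_eq (A := A) (x := x)
      (y := some B :: y ++ [some B]) (z := z) (hw.trans (by simp))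
    obtain ⟨hBx, hBy, hBz⟩ := hg.notMem_of_word_eq (A := B) (x := x ++ [some A]) (y := y)
      (z := some A :: z) (hw.trans (by simp))
    have hx : ∀ a ∈ ({A, B} : Finset ℕ), some a ∉ x := by simp_all
    have hy : ∀ a ∈ ({A, B} : Finset ℕ), some a ∉ y := by simp_all
    have hz : ∀ a ∈ ({A, B} : Finset ℕ), some a ∉ z := by simp_all
    simp only [eraseLetters, hw, List.filter_append, List.filter_cons,
      filter_all_notMem_eq_self hx, filter_all_notMem_eq_self hy, filter_all_notMem_eq_self hz]
    simp

theorem Reduces.eraseLetters (h : Reduces τ p D q) (hDE : Disjoint D E) :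
    Reduces τ (p.eraseLetters E) D (q.eraseLetters E) := by
  cases h with
  | h1 x y A hw =>
    have hA : A ∉ E := Finset.disjoint_singleton_left.1 hDE
    simpa [eraseLetters, List.filter_append] using
      Reduces.h1 (τ := τ) (p := p.eraseLetters E) _ _ A (by simp [eraseLetters, hw, hA])
  | h2 x y z A B hAB hw =>
    obtain ⟨hA, hB⟩ : A ∉ E ∧ B ∉ E := by simpa using Finset.disjoint_left.1 hDE
    simpa [eraseLetters, List.filter_append] using
      Reduces.h2 (τ := τ) (p := p.eraseLetters E) _ _ _ A B hAB
        (by simp [eraseLetters, hw, hA, hB])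

theorem Reduces.join_of_disjoint (hg : p.IsGauss) (h₁ : Reduces τ p D₁ p₁)
    (h₂ : Reduces τ p D₂ p₂) (hD : Disjoint D₁ D₂) : Relation.Join (Ge τ) p₁ p₂ := by
  obtain rfl := h₁.eq_eraseLetters hg
  obtain rfl := h₂.eq_eraseLetters hg
  refine ⟨_, (h₂.eraseLetters hD.symm).ge, ?_⟩
  rw [eraseLetters_comm]
  exact (h₁.eraseLetters hD).ge

theorem isom_map_swap {f : ℕ → α} {a b : ℕ} (w : List (Option ℕ)) (hab : f a = f b) :
    Isom ⟨w, f⟩ ⟨w.map (Option.map (Equiv.swap a b)), f⟩ := by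
  refine ⟨Equiv.swap a b, rfl, fun c _ => ?_⟩
  change f (Equiv.swap a b c) = f c
  rw [Equiv.swap_apply_def]
  split_ifs with hca hcb
  · rw [hca, hab]
  · rw [hcb, hab]
  · rfl

theorem map_swap_eq_self {a b : ℕ} {l : List (Option ℕ)} (ha : some a ∉ l) (hb : some b ∉ l) :
    l.map (Option.map (Equiv.swap a b)) = l := by
  refine (List.map_congr_left fun o ho => ?_).trans l.map_id
  rcases o with _ | c
  · rfl
  · have hca : c ≠ a := by rintro rfl; exact ha ho
    have hcb : c ≠ b := by rintro rfl; exact hb ho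
    simp [Equiv.swap_apply_of_ne_of_ne hca hcb]

theorem IsGauss.reduces_of_h1_of_h2 {k l : List (Option ℕ)} (hg : p.IsGauss)
    (hk : p.word = k ++ some C :: some C :: l)
    (hw : p.word = x ++ some A :: some B :: (y ++ some B :: some A :: z)) (hC : C = A ∨ C = B) :
    Reduces τ ⟨k ++ l, p.proj⟩ {A} ⟨x ++ (y ++ z), p.proj⟩ := by
  rcases hC with rfl | rfl
  · have := (hg.eq_of_word_eq (A := C) (x := k) (y := []) (z := l) (x' := x)
      (y' := some B :: y ++ [some B]) (z' := z) (hk.trans (by simp)) (hw.trans (by simp))).2.1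
    simp at this
  · obtain ⟨rfl, rfl, rfl⟩ := hg.eq_of_word_eq (A := C) (x := k) (y := []) (z := l)
      (x' := x ++ [some A]) (y' := y) (z' := some A :: z) (hk.trans (by simp))
      (hw.trans (by simp))
    simpa using Reduces.h1 (τ := τ) (p := ⟨x ++ [some A] ++ some A :: z, p.proj⟩) x z A (by simp)

theorem IsGauss.isom_of_h2_of_h2 (hτ : ∀ a, τ (τ a) = a) (hg : p.IsGauss)
    (hAB : τ (p.proj A) = p.proj B)
    (hw : p.word = x ++ some A :: some B :: (y ++ some B :: some A :: z))
    (hCA : τ (p.proj C) = p.proj A)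
    (hw' : p.word = x' ++ some C :: some A :: (y' ++ some A :: some C :: z')) :
    Isom ⟨x ++ (y ++ z), p.proj⟩ ⟨x' ++ (y' ++ z'), p.proj⟩ := by
  obtain ⟨rfl, rfl, rfl⟩ := hg.eq_of_word_eq (A := A) (x := x) (y := some B :: y ++ [some B])
    (z := z) (x' := x' ++ [some C]) (y' := y') (z' := some C :: z') (hw.trans (by simp))
    (hw'.trans (by simp))
  obtain ⟨hCx, hCy, hCz⟩ := hg.notMem_of_word_eq (A := C) (x := x')
    (y := some A :: some B :: y ++ [some B, some A]) (z := z') (hw.trans (by simp))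
  obtain ⟨hBx, hBy, hBz⟩ := hg.notMem_of_word_eq (A := B) (x := x' ++ [some C, some A]) (y := y)
    (z := some A :: some C :: z') (hw.trans (by simp))
  replace hCy : some C ∉ y := fun h => hCy (by simp [h])
  replace hBx : some B ∉ x' := fun h => hBx (by simp [h])
  replace hBz : some B ∉ z' := fun h => hBz (by simp [h])
  have hproj : p.proj C = p.proj B := by rw [← hAB, ← hCA, hτ]
  simpa [map_swap_eq_self hCx hBx, map_swap_eq_self hCy hBy, map_swap_eq_self hCz hBz] using
    isom_map_swap (x' ++ some C :: (y ++ some C :: z')) hproj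

theorem IsGauss.eq_of_h2_of_h2_left {B' : ℕ} (hg : p.IsGauss)
    (hw : p.word = x ++ some A :: some B :: (y ++ some B :: some A :: z))
    (hw' : p.word = x' ++ some A :: some B' :: (y' ++ some B' :: some A :: z')) : B = B' := by
  have := (hg.eq_of_word_eq (A := A) (x := x) (y := some B :: (y ++ [some B])) (z := z) (x' := x')
    (y' := some B' :: (y' ++ [some B'])) (z' := z') (hw.trans (by simp)) (hw'.trans (by simp))).2.1
  exact Option.some.inj (List.cons.inj this).1

theorem IsGauss.eq_of_h2_of_h2_right {A' : ℕ} (hg : p.IsGauss)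
    (hw : p.word = x ++ some A :: some B :: (y ++ some B :: some A :: z))
    (hw' : p.word = x' ++ some A' :: some B :: (y' ++ some B :: some A' :: z')) : A = A' := by
  have := (hg.eq_of_word_eq (A := B) (x := x ++ [some A]) (y := y) (z := some A :: z)
    (x' := x' ++ [some A']) (y' := y') (z' := some A' :: z') (hw.trans (by simp))
    (hw'.trans (by simp))).1
  simpa using (List.append_inj' this rfl).2

theorem Reduces.join (hτ : ∀ a, τ (τ a) = a) (hg : p.IsGauss) (h₁ : Reduces τ p D₁ p₁)
    (h₂ : Reduces τ p D₂ p₂) : Relation.Join (Ge τ) p₁ p₂ := by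
  by_cases hD : Disjoint D₁ D₂
  · exact h₁.join_of_disjoint hg h₂ hD
  by_cases hDD : D₁ = D₂
  · subst hDD
    rw [h₁.eq_eraseLetters hg, h₂.eq_eraseLetters hg]
    exact ⟨_, .refl, .refl⟩
  obtain ⟨a, ha₁, ha₂⟩ := Finset.not_disjoint_iff.1 hD
  cases h₁ with
  | h1 x y A hw =>
    cases h₂ with
    | h1 x' y' C hw' => simp_all
    | h2 x' y' z' A' B' _ hw' =>
      exact ⟨_, (hg.reduces_of_h1_of_h2 hw hw' (by simp_all)).ge, .refl⟩
  | h2 x y z A B hAB hw =>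
    cases h₂ with
    | h1 x' y' C hw' => exact ⟨_, .refl, (hg.reduces_of_h1_of_h2 hw' hw (by simp_all)).ge⟩
    | h2 x' y' z' A' B' hAB' hw' =>
      simp only [Finset.mem_insert, Finset.mem_singleton] at ha₁ ha₂
      rcases ha₁ with rfl | rfl <;> rcases ha₂ with rfl | rfl
      · exact absurd (by rw [hg.eq_of_h2_of_h2_left hw hw']) hDD
      · exact ⟨_, (hg.isom_of_h2_of_h2 hτ hAB hw hAB' hw').ge, .refl⟩
      · exact ⟨_, .refl, (hg.isom_of_h2_of_h2 hτ hAB' hw' hAB hw).ge⟩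
      · exact absurd (by rw [hg.eq_of_h2_of_h2_right hw hw']) hDD

end Phrase

open Phrase in
theorem stmt19_general {α : Type}
    (τ : α → α) (hτ : ∀ a : α, τ (τ a) = a)
    (p p₁ p₂ : Phrase α) (hg : p.IsGauss)
    (h1 : RMove τ p p₁) (h2 : RMove τ p p₂) :
    ∃ p' : Phrase α, Ge τ p₁ p' ∧ Ge τ p₂ p' := by
  obtain ⟨D₁, h₁⟩ := rMove_iff_exists_reduces.1 h1
  obtain ⟨D₂, h₂⟩ := rMove_iff_exists_reduces.1 h2
  exact h₁.join hτ hg h₂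

open Phrase in
/-- confluence for `S = ∅`: if `p₁` and `p₂` are results of reducing
moves applied to a nanophrase `p`, then there is a common `p'` with `p₁ ≥ p'` and
`p₂ ≥ p'`. -/
theorem stmt19 {α : Type} [Finite α] [Nonempty α]
    (τ : α → α) (hτ : ∀ a : α, τ (τ a) = a)
    (p p₁ p₂ : Phrase α) (hg : p.IsGauss)
    (h1 : RMove τ p p₁) (h2 : RMove τ p p₂) :
    ∃ p' : Phrase α, Ge τ p₁ p' ∧ Ge τ p₂ p' :=
  stmt19_general τ hτ p p₁ p₂ hg h1 h2
end
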